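/- Let A and B be disjoint nonempty finite sets of indices and let h be a real-valued function on A ∪ B. Let m_A = max_{k ∈ A} h k, s_A = Σ_{k ∈ A} exp (h k − m_A), and similarly m_B, s_B for B. Let m = max m_A m_B. Then Σ_{k ∈ A ∪ B} exp (h k − m) = s_A * exp (m_A − m) + s_B * exp (m_B − m), and consequently log (Σ_{k ∈ A ∪ B} exp (h k)) = m + log (s_A * exp (m_A − m) + s_B * exp (m_B − m)). (This is the correctness of the stateful online max/sum-exp merge used by the epilogue's running log-sum-exp statistics for cross-entropy.) -/
import Mathlib


/-- Correctness of the stateful online max/sum-exp merge: for disjoint nonempty finite sets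
`A` and `B` with running statistics `(m_A, s_A)` and `(m_B, s_B)` and `m = max m_A m_B`,
`Σ_{k ∈ A ∪ B} exp (h k − m) = s_A * exp (m_A − m) + s_B * exp (m_B − m)`, and hence
`log Σ_{k ∈ A ∪ B} exp (h k) = m + log (s_A * exp (m_A − m) + s_B * exp (m_B − m))`. -/
theorem online_lse_merge {ι : Type*} [DecidableEq ι]
    (A B : Finset ι) (hA : A.Nonempty) (hB : B.Nonempty) (hAB : Disjoint A B)
    (h : ι → ℝ)
    (mA mB sA sB m : ℝ)
    (hmA : mA = A.sup' hA h) (hmB : mB = B.sup' hB h)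
    (hsA : sA = ∑ k ∈ A, Real.exp (h k - mA))
    (hsB : sB = ∑ k ∈ B, Real.exp (h k - mB))
    (hm : m = max mA mB) :
    (∑ k ∈ A ∪ B, Real.exp (h k - m) =
        sA * Real.exp (mA - m) + sB * Real.exp (mB - m)) ∧
      Real.log (∑ k ∈ A ∪ B, Real.exp (h k)) =
        m + Real.log (sA * Real.exp (mA - m) + sB * Real.exp (mB - m)) := by
  have key : ∑ k ∈ A ∪ B, Real.exp (h k - m) =
      sA * Real.exp (mA - m) + sB * Real.exp (mB - m) := by
    rw [Finset.sum_union hAB, hsA, hsB, Finset.sum_mul, Finset.sum_mul]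
    congr 1 <;>
      exact Finset.sum_congr rfl fun k _ => by rw [← Real.exp_add, sub_add_sub_cancel]
  refine ⟨key, ?_⟩
  have hUn : (A ∪ B).Nonempty := hA.mono Finset.subset_union_left
  have hpos : 0 < ∑ k ∈ A ∪ B, Real.exp (h k - m) :=
    Finset.sum_pos (fun k _ => Real.exp_pos _) hUn
  have hsum : ∑ k ∈ A ∪ B, Real.exp (h k) =
      Real.exp m * ∑ k ∈ A ∪ B, Real.exp (h k - m) := by
    rw [Finset.mul_sum]
    apply Finset.sum_congr rfl
    intro k _
    rw [← Real.exp_add]; ring_nf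
  rw [hsum, Real.log_mul (Real.exp_ne_zero m) (ne_of_gt hpos), Real.log_exp, key]
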